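/- arXiv:2010.12797 — 4 statements merged into one kernel-verified Lean document; each statement's English description precedes it below -/
import Mathlib

section
/- If the value function v on coalitions is defined by v(C) = H(θ) - H(θ | D_C) (information gain), and the datasets D_i are conditionally independent given θ, then v is submodular: for all parties i and coalitions C ⊆ C' ⊆ N \ {i}, v(C' ∪ {i}) - v(C') ≤ v(C ∪ {i}) - v(C). -/
open Finset

namespace IGSubmodular

variable {Ω : Type*} [Fintype Ω] {Θ V : Type*} [Fintype Θ] [Fintype V]
  [DecidableEq Θ] [DecidableEq V]

/-- Probability of an event under the probability mass function `p`. -/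
def pr (p : Ω → ℝ) (E : Ω → Prop) [DecidablePred E] : ℝ :=
  ∑ ω ∈ Finset.univ.filter E, p ω

/-- Shannon entropy of a random variable `X : Ω → A` under `p`
(using `negMulLog x = -x * log x`, with the convention `0 log 0 = 0`). -/
noncomputable def entropy {A : Type*} [Fintype A] [DecidableEq A]
    (p : Ω → ℝ) (X : Ω → A) : ℝ :=
  ∑ a : A, Real.negMulLog (pr p (fun ω => X ω = a))

/-- Conditional entropy `H(X | Y) = H(X, Y) - H(Y)` (chain rule). -/
noncomputable def condEntropy {A B : Type*} [Fintype A] [DecidableEq A]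
    [Fintype B] [DecidableEq B] (p : Ω → ℝ) (X : Ω → A) (Y : Ω → B) : ℝ :=
  entropy p (fun ω => (X ω, Y ω)) - entropy p Y

/-- The data of coalition `C`, as a single random variable: party `i`'s data is
reported if `i ∈ C` and masked (as `none`) otherwise. -/
def coalitionData {n : ℕ} (D : Fin n → Ω → V) (C : Finset (Fin n)) (ω : Ω) :
    Fin n → Option V :=
  fun i => if i ∈ C then some (D i ω) else none

/-- The information-gain value of coalition `C`:
`v C = H(θ) - H(θ | D_C) = I(θ ; D_C)`. -/
noncomputable def igValue {n : ℕ} (p : Ω → ℝ) (θ : Ω → Θ) (D : Fin n → Ω → V)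
    (C : Finset (Fin n)) : ℝ :=
  entropy p θ - condEntropy p θ (coalitionData D C)


section helperlemmas
variable {p : Ω → ℝ}

lemma pr_nonneg (hp : ∀ ω, 0 ≤ p ω) (E : Ω → Prop) [DecidablePred E] : 0 ≤ pr p E :=
  Finset.sum_nonneg fun ω _ => hp ω

lemma pr_congr {E F : Ω → Prop} [DecidablePred E] [DecidablePred F]
    (h : ∀ ω, E ω ↔ F ω) : pr p E = pr p F := by
  unfold pr
  congr 1
  ext ω
  simp [h ω]

lemma pr_eq_zero_of_forall_not {E : Ω → Prop} [DecidablePred E]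
    (h : ∀ ω, ¬ E ω) : pr p E = 0 := by
  unfold pr
  rw [Finset.filter_false_of_mem (fun ω _ => h ω)]
  simp

lemma exists_of_pr_ne_zero {E : Ω → Prop} [DecidablePred E]
    (h : pr p E ≠ 0) : ∃ ω, E ω ∧ p ω ≠ 0 := by
  by_contra hc
  push_neg at hc
  apply h
  apply Finset.sum_eq_zero
  intro ω hω
  exact hc ω (Finset.mem_filter.mp hω).2

/-- marginalization -/
lemma pr_partition {A : Type*} [Fintype A] [DecidableEq A]
    (E : Ω → Prop) [DecidablePred E] (X : Ω → A) :
    pr p E = ∑ a : A, pr p (fun ω => E ω ∧ X ω = a) := by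
  unfold pr
  rw [← Finset.sum_fiberwise (Finset.univ.filter E) X p]
  congr 1
  ext a
  congr 1
  ext ω
  simp [and_comm]

lemma entropy_congr {A B : Type*} [Fintype A] [DecidableEq A] [Fintype B] [DecidableEq B]
    (X : Ω → A) (Y : Ω → B) (g : A → B) (h : B → A)
    (hg : ∀ ω, g (X ω) = Y ω) (hh : ∀ ω, h (Y ω) = X ω) :
    entropy p X = entropy p Y := by
  classical
  unfold entropy
  have key1 : ∀ a : A, pr p (fun ω => X ω = a) ≠ 0 →
      (h (g a) = a ∧ pr p (fun ω => X ω = a) = pr p (fun ω => Y ω = g a)) := by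
    intro a ha
    obtain ⟨ω₀, hX, -⟩ := exists_of_pr_ne_zero ha
    have hga : h (g a) = a := by rw [← hX, hg, hh]
    refine ⟨hga, pr_congr fun ω => ?_⟩
    constructor
    · rintro rfl; rw [← hg]
    · intro hY
      rw [← hh ω, hY, hga]
  have key2 : ∀ b : B, pr p (fun ω => Y ω = b) ≠ 0 →
      (g (h b) = b ∧ pr p (fun ω => Y ω = b) = pr p (fun ω => X ω = h b)) := by
    intro b hb
    obtain ⟨ω₀, hY, -⟩ := exists_of_pr_ne_zero hb
    have hgb : g (h b) = b := by rw [← hY, hh, hg]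
    refine ⟨hgb, pr_congr fun ω => ?_⟩
    constructor
    · rintro rfl; rw [← hh]
    · intro hX
      rw [← hg ω, hX, hgb]
  rw [← Finset.sum_filter_ne_zero (s := (univ : Finset A))
        (f := fun a => Real.negMulLog (pr p (fun ω => X ω = a))),
      ← Finset.sum_filter_ne_zero (s := (univ : Finset B))
        (f := fun b => Real.negMulLog (pr p (fun ω => Y ω = b)))]
  have hXne : ∀ a, Real.negMulLog (pr p (fun ω => X ω = a)) ≠ 0 →
      pr p (fun ω => X ω = a) ≠ 0 := by
    intro a hne hz; apply hne; rw [hz]; exact Real.negMulLog_zero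
  have hYne : ∀ b, Real.negMulLog (pr p (fun ω => Y ω = b)) ≠ 0 →
      pr p (fun ω => Y ω = b) ≠ 0 := by
    intro b hne hz; apply hne; rw [hz]; exact Real.negMulLog_zero
  apply Finset.sum_nbij' (i := g) (j := h)
  · intro a ha
    simp only [mem_filter, mem_univ, true_and] at ha ⊢
    rw [← (key1 a (hXne a ha)).2]; exact ha
  · intro b hb
    simp only [mem_filter, mem_univ, true_and] at hb ⊢
    rw [← (key2 b (hYne b hb)).2]; exact hb
  · intro a ha
    simp only [mem_filter, mem_univ, true_and] at ha
    exact (key1 a (hXne a ha)).1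
  · intro b hb
    simp only [mem_filter, mem_univ, true_and] at hb
    exact (key2 b (hYne b hb)).1
  · intro a ha
    simp only [mem_filter, mem_univ, true_and] at ha
    rw [(key1 a (hXne a ha)).2]


lemma pr_mono {E F : Ω → Prop} [DecidablePred E] [DecidablePred F]
    (hp : ∀ ω, 0 ≤ p ω) (h : ∀ ω, E ω → F ω) : pr p E ≤ pr p F := by
  apply Finset.sum_le_sum_of_subset_of_nonneg
  · intro ω hω
    rw [Finset.mem_filter] at hω ⊢
    exact ⟨hω.1, h ω hω.2⟩
  · intro ω _ _
    exact hp ω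

lemma entropy_of_isEmpty [IsEmpty Ω] {A : Type*} [Fintype A] [DecidableEq A] (X : Ω → A) :
    entropy p X = 0 := by
  unfold entropy pr
  simp

end helperlemmas

section distlemmas
open Real
variable {T U W : Type*} [Fintype T] [Fintype U] [Fintype W]

/-- Entropy additivity under conditional independence, distribution form. -/
lemma sum_negMulLog_of_condIndep (s : T → U → W → ℝ) (hs : ∀ t u w, 0 ≤ s t u w)
    (hfac : ∀ t u w, s t u w * (∑ u', ∑ w', s t u' w') =
      (∑ w', s t u w') * (∑ u', s t u' w)) :
    ∑ t, ∑ u, ∑ w, negMulLog (s t u w) =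
      (∑ t, ∑ u, negMulLog (∑ w, s t u w)) + (∑ t, ∑ w, negMulLog (∑ u, s t u w))
        - ∑ t, negMulLog (∑ u, ∑ w, s t u w) := by
  have key : ∀ t, ∑ u, ∑ w, negMulLog (s t u w) =
      (∑ u, negMulLog (∑ w, s t u w)) + (∑ w, negMulLog (∑ u, s t u w))
        - negMulLog (∑ u, ∑ w, s t u w) := by
    intro t
    set sU : U → ℝ := fun u => ∑ w, s t u w with hsU
    set sW : W → ℝ := fun w => ∑ u, s t u w with hsW
    set pT : ℝ := ∑ u, ∑ w, s t u w with hpT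
    have hsUnn : ∀ u, 0 ≤ sU u := fun u => Finset.sum_nonneg fun w _ => hs t u w
    have hsWnn : ∀ w, 0 ≤ sW w := fun w => Finset.sum_nonneg fun u _ => hs t u w
    have hterm : ∀ u w, negMulLog (s t u w) =
        (-(s t u w) * Real.log (sU u)) + (-(s t u w) * Real.log (sW w))
          + (s t u w * Real.log pT) := by
      intro u w
      rcases eq_or_lt_of_le (hs t u w) with hz | hpos
      · rw [← hz, negMulLog_zero]; ring
      · have hU : 0 < sU u := lt_of_lt_of_le hpos
          (Finset.single_le_sum (fun w' _ => hs t u w') (mem_univ w))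
        have hW : 0 < sW w := lt_of_lt_of_le hpos
          (Finset.single_le_sum (fun u' _ => hs t u' w) (mem_univ u))
        have hT : 0 < pT := lt_of_lt_of_le hU
          (Finset.single_le_sum (fun u' _ => hsUnn u') (mem_univ u))
        have hlog : Real.log (s t u w) = Real.log (sU u) + Real.log (sW w) - Real.log pT := by
          have hseq : s t u w = sU u * sW w / pT := by
            field_simp
            exact hfac t u w
          rw [hseq, Real.log_div (by positivity) (ne_of_gt hT),
            Real.log_mul (ne_of_gt hU) (ne_of_gt hW)]
        rw [negMulLog, hlog]; ring
    calc ∑ u, ∑ w, negMulLog (s t u w)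
        = ∑ u, ∑ w, ((-(s t u w) * Real.log (sU u)) + (-(s t u w) * Real.log (sW w))
            + (s t u w * Real.log pT)) := by
          exact Finset.sum_congr rfl fun u _ => Finset.sum_congr rfl fun w _ => hterm u w
      _ = (∑ u, ∑ w, -(s t u w) * Real.log (sU u))
            + (∑ u, ∑ w, -(s t u w) * Real.log (sW w))
            + (∑ u, ∑ w, s t u w * Real.log pT) := by
          simp [Finset.sum_add_distrib]
      _ = (∑ u, negMulLog (sU u)) + (∑ w, negMulLog (sW w)) - negMulLog pT := by
        congr 1
        · congr 1
          · refine Finset.sum_congr rfl fun u _ => ?_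
            rw [negMulLog]
            rw [← Finset.sum_mul]
            rw [← Finset.sum_neg_distrib]

          · rw [Finset.sum_comm]
            refine Finset.sum_congr rfl fun w _ => ?_
            rw [negMulLog, ← Finset.sum_mul, ← Finset.sum_neg_distrib]
        · rw [negMulLog]
          rw [show (∑ u, ∑ w, s t u w * Real.log pT) = pT * Real.log pT by
            rw [hpT, Finset.sum_mul]
            exact Finset.sum_congr rfl fun u _ => by rw [Finset.sum_mul]]
          ring
  calc ∑ t, ∑ u, ∑ w, negMulLog (s t u w)
      = ∑ t, ((∑ u, negMulLog (∑ w, s t u w)) + (∑ w, negMulLog (∑ u, s t u w))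
          - negMulLog (∑ u, ∑ w, s t u w)) := Finset.sum_congr rfl fun t _ => key t
    _ = _ := by rw [Finset.sum_sub_distrib, Finset.sum_add_distrib]



lemma sum_neg_mul_const {ι : Type*} (s : Finset ι) (f : ι → ℝ) (L : ℝ) :
    ∑ i ∈ s, (-(f i) * L) = -(∑ i ∈ s, f i) * L := by
  simp [Finset.sum_mul, neg_mul, Finset.sum_neg_distrib]

/-- Strong subadditivity of Shannon entropy, distribution form. -/
lemma strong_subadditivity (r : U → T → W → ℝ) (hr : ∀ a b c, 0 ≤ r a b c) :
    (∑ a, ∑ b, ∑ c, negMulLog (r a b c)) + (∑ b, negMulLog (∑ a, ∑ c, r a b c)) ≤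
      (∑ a, ∑ b, negMulLog (∑ c, r a b c)) + (∑ b, ∑ c, negMulLog (∑ a, r a b c)) := by
  classical
  set rAB : U → T → ℝ := fun a b => ∑ c, r a b c with hrAB
  set rBC : T → W → ℝ := fun b c => ∑ a, r a b c with hrBC
  set rB : T → ℝ := fun b => ∑ a, ∑ c, r a b c with hrB
  have hrABnn : ∀ a b, 0 ≤ rAB a b := fun a b => Finset.sum_nonneg fun c _ => hr a b c
  have hrBCnn : ∀ b c, 0 ≤ rBC b c := fun b c => Finset.sum_nonneg fun a _ => hr a b c
  have hrBnn : ∀ b, 0 ≤ rB b := fun b => Finset.sum_nonneg fun a _ => hrABnn a b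
  have hrB_AB : ∀ b, rB b = ∑ a, rAB a b := fun b => rfl
  have hrB_BC : ∀ b, rB b = ∑ c, rBC b c := fun b => by
    rw [hrB]; dsimp only; rw [Finset.sum_comm]
  set g : U → T → W → ℝ := fun a b c => if rB b = 0 then 0 else rAB a b * rBC b c / rB b
    with hg
  have hgnn : ∀ a b c, 0 ≤ g a b c := by
    intro a b c
    rw [hg]; dsimp only
    split
    · exact le_refl 0
    · have := hrABnn a b; have := hrBCnn b c; have := hrBnn b; positivity
  -- termwise inequality
  have hterm : ∀ a b c,
      r a b c - g a b c ≤
        (-(r a b c) * Real.log (rAB a b)) + (-(r a b c) * Real.log (rBC b c))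
          - negMulLog (r a b c) + r a b c * Real.log (rB b) := by
    intro a b c
    rcases eq_or_lt_of_le (hr a b c) with hz | hpos
    · rw [← hz, negMulLog_zero]
      have := hgnn a b c
      simp only [neg_zero, zero_mul, zero_sub, zero_add, add_zero, sub_zero, neg_zero]
      linarith
    · have hAB : 0 < rAB a b := lt_of_lt_of_le hpos
        (Finset.single_le_sum (fun c' _ => hr a b c') (mem_univ c))
      have hBC : 0 < rBC b c := lt_of_lt_of_le hpos
        (Finset.single_le_sum (fun a' _ => hr a' b c) (mem_univ a))
      have hB : 0 < rB b := lt_of_lt_of_le hAB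
        (hrB_AB b ▸ Finset.single_le_sum (fun a' _ => hrABnn a' b) (mem_univ a))
      have hgval : g a b c = rAB a b * rBC b c / rB b := by
        rw [hg]; dsimp only; rw [if_neg (ne_of_gt hB)]
      have hgpos : 0 < g a b c := by
        rw [hgval]; positivity
      have hlog := Real.log_le_sub_one_of_pos (show 0 < g a b c / r a b c by positivity)
      have hlogeq : Real.log (g a b c / r a b c) =
          Real.log (rAB a b) + Real.log (rBC b c) - Real.log (rB b) - Real.log (r a b c) := by
        rw [Real.log_div (ne_of_gt hgpos) (ne_of_gt hpos), hgval,
          Real.log_div (by positivity) (ne_of_gt hB),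
          Real.log_mul (ne_of_gt hAB) (ne_of_gt hBC)]
      rw [hlogeq] at hlog
      rw [negMulLog]
      have hmul := mul_le_mul_of_nonneg_left hlog (le_of_lt hpos)
      have h2 : r a b c * (g a b c / r a b c) = g a b c := by field_simp
      nlinarith [hmul, h2]
  -- sum of g equals sum of r
  have hsumr : (∑ a, ∑ b, ∑ c, r a b c) = ∑ b, rB b := Finset.sum_comm
  have hsumg : (∑ a, ∑ b, ∑ c, g a b c) = ∑ b, rB b := by
    rw [Finset.sum_comm (f := fun a b => ∑ c, g a b c)]
    refine Finset.sum_congr rfl fun b _ => ?_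
    by_cases hb : rB b = 0
    · have hz : ∀ a c, g a b c = 0 := by intro a c; rw [hg]; simp [hb]
      simp only [hz, Finset.sum_const_zero, hb]
    · have hcol : ∀ a, ∑ c, g a b c = rAB a b := by
        intro a
        have hc : ∀ c, g a b c = rAB a b * rBC b c / rB b := by
          intro c; rw [hg]; dsimp only; rw [if_neg hb]
        rw [Finset.sum_congr rfl fun c _ => hc c, ← Finset.sum_div, ← Finset.mul_sum,
          ← hrB_BC b]
        field_simp
      rw [Finset.sum_congr rfl fun a _ => hcol a, ← hrB_AB b]
  -- pull logs into sums
  have hAB_pull : (∑ a, ∑ b, negMulLog (rAB a b)) =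
      ∑ a, ∑ b, ∑ c, (-(r a b c) * Real.log (rAB a b)) := by
    refine Finset.sum_congr rfl fun a _ => Finset.sum_congr rfl fun b _ => ?_
    rw [sum_neg_mul_const, negMulLog]
  have hBC_pull : (∑ b, ∑ c, negMulLog (rBC b c)) =
      ∑ a, ∑ b, ∑ c, (-(r a b c) * Real.log (rBC b c)) := by
    calc (∑ b, ∑ c, negMulLog (rBC b c))
        = ∑ b, ∑ c, ∑ a, (-(r a b c) * Real.log (rBC b c)) := by
          refine Finset.sum_congr rfl fun b _ => Finset.sum_congr rfl fun c _ => ?_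
          rw [negMulLog]
          exact (sum_neg_mul_const _ _ _).symm
      _ = ∑ b, ∑ a, ∑ c, (-(r a b c) * Real.log (rBC b c)) :=
          Finset.sum_congr rfl fun b _ => Finset.sum_comm
      _ = ∑ a, ∑ b, ∑ c, (-(r a b c) * Real.log (rBC b c)) := Finset.sum_comm
  have hB_pull : (∑ b, negMulLog (rB b)) =
      ∑ a, ∑ b, ∑ c, (-(r a b c) * Real.log (rB b)) := by
    calc (∑ b, negMulLog (rB b))
        = ∑ b, ∑ a, ∑ c, (-(r a b c) * Real.log (rB b)) := by
          refine Finset.sum_congr rfl fun b _ => ?_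
          have h1 : ∀ a, ∑ c, (-(r a b c) * Real.log (rB b))
              = -(rAB a b) * Real.log (rB b) := fun a => sum_neg_mul_const _ _ _
          rw [Finset.sum_congr rfl fun a _ => h1 a, sum_neg_mul_const, ← hrB_AB b, negMulLog]
      _ = ∑ a, ∑ b, ∑ c, (-(r a b c) * Real.log (rB b)) := Finset.sum_comm
  -- put it together
  have hmain : (∑ a, ∑ b, ∑ c, (r a b c - g a b c)) ≤
      ∑ a, ∑ b, ∑ c, ((-(r a b c) * Real.log (rAB a b)) + (-(r a b c) * Real.log (rBC b c))
        - negMulLog (r a b c) + r a b c * Real.log (rB b)) := by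
    refine Finset.sum_le_sum fun a _ => Finset.sum_le_sum fun b _ =>
      Finset.sum_le_sum fun c _ => hterm a b c
  have hL : (∑ a, ∑ b, ∑ c, (r a b c - g a b c)) = 0 := by
    simp only [Finset.sum_sub_distrib]
    rw [hsumr, hsumg]; ring
  have hR : (∑ a, ∑ b, ∑ c, ((-(r a b c) * Real.log (rAB a b))
        + (-(r a b c) * Real.log (rBC b c))
        - negMulLog (r a b c) + r a b c * Real.log (rB b))) =
      (∑ a, ∑ b, negMulLog (rAB a b)) + (∑ b, ∑ c, negMulLog (rBC b c))
        - (∑ a, ∑ b, ∑ c, negMulLog (r a b c)) - (∑ b, negMulLog (rB b)) := by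
    have hBlog : ∀ a b c, r a b c * Real.log (rB b) = -(-(r a b c) * Real.log (rB b)) := by
      intro a b c; ring
    simp only [Finset.sum_add_distrib, Finset.sum_sub_distrib]
    rw [hAB_pull, hBC_pull, hB_pull]
    simp only [hBlog, Finset.sum_neg_distrib]
    ring
  rw [hL, hR] at hmain
  have h1 : (∑ b, negMulLog (∑ a, ∑ c, r a b c)) = ∑ b, negMulLog (rB b) := rfl
  have h2 : (∑ a, ∑ b, negMulLog (∑ c, r a b c)) = ∑ a, ∑ b, negMulLog (rAB a b) := rfl
  have h3 : (∑ b, ∑ c, negMulLog (∑ a, r a b c)) = ∑ b, ∑ c, negMulLog (rBC b c) := rfl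
  rw [h1, h2, h3]
  linarith


end distlemmas

section entlemmas
open Real
variable {p : Ω → ℝ} {A B C : Type*} [Fintype A] [DecidableEq A] [Fintype B] [DecidableEq B]
  [Fintype C] [DecidableEq C]

lemma entropy_pair (X : Ω → A) (Y : Ω → B) :
    entropy p (fun ω => (X ω, Y ω)) =
      ∑ a, ∑ b, negMulLog (pr p (fun ω => X ω = a ∧ Y ω = b)) := by
  unfold entropy
  rw [Fintype.sum_prod_type]
  refine Finset.sum_congr rfl fun a _ => Finset.sum_congr rfl fun b _ => ?_
  congr 1
  exact pr_congr fun ω => by simp [Prod.ext_iff]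

lemma entropy_triple (X : Ω → A) (Y : Ω → B) (Z : Ω → C) :
    entropy p (fun ω => (X ω, Y ω, Z ω)) =
      ∑ a, ∑ b, ∑ c, negMulLog (pr p (fun ω => X ω = a ∧ Y ω = b ∧ Z ω = c)) := by
  unfold entropy
  rw [Fintype.sum_prod_type]
  refine Finset.sum_congr rfl fun a _ => ?_
  rw [Fintype.sum_prod_type]
  refine Finset.sum_congr rfl fun b _ => Finset.sum_congr rfl fun c _ => ?_
  congr 1
  exact pr_congr fun ω => by simp [Prod.ext_iff, and_assoc]

/-- `H(T,U,W) = H(T,U) + H(T,W) - H(T)` under conditional independence. -/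
lemma entropy_condIndep (hp : ∀ ω, 0 ≤ p ω) (T : Ω → A) (U : Ω → B) (W : Ω → C)
    (hfac : ∀ t u w, pr p (fun ω => T ω = t ∧ U ω = u ∧ W ω = w) * pr p (fun ω => T ω = t) =
      pr p (fun ω => T ω = t ∧ U ω = u) * pr p (fun ω => T ω = t ∧ W ω = w)) :
    entropy p (fun ω => (T ω, U ω, W ω)) =
      entropy p (fun ω => (T ω, U ω)) + entropy p (fun ω => (T ω, W ω))
        - entropy p T := by
  classical
  set s : A → B → C → ℝ := fun t u w => pr p (fun ω => T ω = t ∧ U ω = u ∧ W ω = w) with hs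
  have hUm : ∀ t u, (∑ w, s t u w) = pr p (fun ω => T ω = t ∧ U ω = u) := by
    intro t u
    rw [pr_partition (fun ω => T ω = t ∧ U ω = u) W]
    exact Finset.sum_congr rfl fun w _ => pr_congr fun ω => by tauto
  have hWm : ∀ t w, (∑ u, s t u w) = pr p (fun ω => T ω = t ∧ W ω = w) := by
    intro t w
    rw [pr_partition (fun ω => T ω = t ∧ W ω = w) U]
    exact Finset.sum_congr rfl fun u _ => pr_congr fun ω => by tauto
  have hTm : ∀ t, (∑ u, ∑ w, s t u w) = pr p (fun ω => T ω = t) := by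
    intro t
    rw [pr_partition (fun ω => T ω = t) U]
    refine Finset.sum_congr rfl fun u _ => ?_
    rw [hUm t u]
  rw [entropy_triple, entropy_pair, entropy_pair]
  rw [show entropy p T = ∑ t, negMulLog (pr p (fun ω => T ω = t)) from rfl]
  have := sum_negMulLog_of_condIndep s (fun t u w => pr_nonneg hp _)
    (fun t u w => by rw [hUm, hWm, hTm]; exact hfac t u w)
  rw [hs] at this
  simp only at this
  rw [this]
  congr 1
  · congr 1
    · exact Finset.sum_congr rfl fun t _ => Finset.sum_congr rfl fun u _ => by
        rw [← hUm t u]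
    · exact Finset.sum_congr rfl fun t _ => Finset.sum_congr rfl fun w _ => by
        rw [← hWm t w]
  · exact Finset.sum_congr rfl fun t _ => by rw [← hTm t]

/-- `H(X,Y,Z) + H(Y) ≤ H(X,Y) + H(Y,Z)`: strong subadditivity. -/
lemma entropy_SSA (hp : ∀ ω, 0 ≤ p ω) (X : Ω → A) (Y : Ω → B) (Z : Ω → C) :
    entropy p (fun ω => (X ω, Y ω, Z ω)) + entropy p Y ≤
      entropy p (fun ω => (X ω, Y ω)) + entropy p (fun ω => (Y ω, Z ω)) := by
  classical
  set r : A → B → C → ℝ := fun a b c => pr p (fun ω => X ω = a ∧ Y ω = b ∧ Z ω = c) with hr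
  have hABm : ∀ a b, (∑ c, r a b c) = pr p (fun ω => X ω = a ∧ Y ω = b) := by
    intro a b
    rw [pr_partition (fun ω => X ω = a ∧ Y ω = b) Z]
    exact Finset.sum_congr rfl fun c _ => pr_congr fun ω => by tauto
  have hBCm : ∀ b c, (∑ a, r a b c) = pr p (fun ω => Y ω = b ∧ Z ω = c) := by
    intro b c
    rw [pr_partition (fun ω => Y ω = b ∧ Z ω = c) X]
    exact Finset.sum_congr rfl fun a _ => pr_congr fun ω => by tauto
  have hBm : ∀ b, (∑ a, ∑ c, r a b c) = pr p (fun ω => Y ω = b) := by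
    intro b
    rw [pr_partition (fun ω => Y ω = b) X]
    refine Finset.sum_congr rfl fun a _ => ?_
    rw [pr_partition (fun ω => Y ω = b ∧ X ω = a) Z]
    exact Finset.sum_congr rfl fun c _ => pr_congr fun ω => by tauto
  have key := strong_subadditivity r (fun a b c => pr_nonneg hp _)
  rw [entropy_triple, entropy_pair, entropy_pair,
    show entropy p Y = ∑ b, negMulLog (pr p (fun ω => Y ω = b)) from rfl]
  calc _ = (∑ a, ∑ b, ∑ c, negMulLog (r a b c)) + (∑ b, negMulLog (∑ a, ∑ c, r a b c)) := by
        congr 1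
        exact Finset.sum_congr rfl fun b _ => by rw [hBm b]
    _ ≤ (∑ a, ∑ b, negMulLog (∑ c, r a b c)) + (∑ b, ∑ c, negMulLog (∑ a, r a b c)) := key
    _ = _ := by
        congr 1
        · exact Finset.sum_congr rfl fun a _ => Finset.sum_congr rfl fun b _ => by
            rw [hABm a b]
        · exact Finset.sum_congr rfl fun b _ => Finset.sum_congr rfl fun c _ => by
            rw [hBCm b c]


end entlemmas


section coalition
variable {n : ℕ} {p : Ω → ℝ} {θ : Ω → Θ} {D : Fin n → Ω → V}

/-- Pairwise factorization of the joint of `(θ, D_C, D_i)` from mutual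
conditional independence. -/
lemma coalition_fac (hp : ∀ ω, 0 ≤ p ω)
    (hCondIndep : ∀ (C : Finset (Fin n)) (t : Θ) (f : Fin n → V),
      pr p (fun ω => θ ω = t ∧ ∀ i ∈ C, D i ω = f i) *
          (pr p (fun ω => θ ω = t)) ^ (C.card) =
        pr p (fun ω => θ ω = t) *
          ∏ i ∈ C, pr p (fun ω => θ ω = t ∧ D i ω = f i))
    {i : Fin n} {C : Finset (Fin n)} (hiC : i ∉ C)
    (t : Θ) (u : Fin n → Option V) (w : V) :
    pr p (fun ω => θ ω = t ∧ coalitionData D C ω = u ∧ D i ω = w) *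
        pr p (fun ω => θ ω = t) =
      pr p (fun ω => θ ω = t ∧ coalitionData D C ω = u) *
        pr p (fun ω => θ ω = t ∧ D i ω = w) := by
  classical
  by_cases hatt : ∃ ω₀, coalitionData D C ω₀ = u
  · obtain ⟨ω₀, hω₀⟩ := hatt
    set f : Fin n → V := fun j => if j = i then w else D j ω₀ with hf
    have hfi : f i = w := by rw [hf]; simp
    have hfC : ∀ j ∈ C, f j = D j ω₀ := by
      intro j hj
      rw [hf]
      simp only [if_neg (fun hji : j = i => hiC (hji ▸ hj))]
    have hiffC : ∀ ω, (coalitionData D C ω = u) ↔ (∀ j ∈ C, D j ω = f j) := by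
      intro ω
      constructor
      · intro h j hj
        have h1 : coalitionData D C ω j = coalitionData D C ω₀ j := by rw [h, hω₀]
        simp only [coalitionData, if_pos hj] at h1
        rw [Option.some_inj] at h1
        rw [h1, hfC j hj]
      · intro h
        rw [← hω₀]
        funext j
        simp only [coalitionData]
        by_cases hj : j ∈ C
        · rw [if_pos hj, if_pos hj, h j hj, hfC j hj]
        · rw [if_neg hj, if_neg hj]
    have hiffiC : ∀ ω, (coalitionData D C ω = u ∧ D i ω = w) ↔
        (∀ j ∈ insert i C, D j ω = f j) := by
      intro ω
      constructor
      · rintro ⟨h1, h2⟩ j hj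
        rcases Finset.mem_insert.mp hj with rfl | hj
        · rw [h2, hfi]
        · exact (hiffC ω).mp h1 j hj
      · intro h
        refine ⟨(hiffC ω).mpr fun j hj => h j (Finset.mem_insert_of_mem hj), ?_⟩
        rw [h i (Finset.mem_insert_self i C), hfi]
    have h1 := hCondIndep C t f
    have h2 := hCondIndep (insert i C) t f
    rw [Finset.prod_insert hiC, Finset.card_insert_of_notMem hiC] at h2
    set Apr := pr p (fun ω => θ ω = t) with hApr
    set E1 := pr p (fun ω => θ ω = t ∧ ∀ j ∈ C, D j ω = f j) with hE1
    set E2 := pr p (fun ω => θ ω = t ∧ ∀ j ∈ insert i C, D j ω = f j) with hE2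
    set Pi := pr p (fun ω => θ ω = t ∧ D i ω = f i) with hPi
    set PC := ∏ j ∈ C, pr p (fun ω => θ ω = t ∧ D j ω = f j) with hPC
    have goal1 : pr p (fun ω => θ ω = t ∧ coalitionData D C ω = u ∧ D i ω = w) = E2 := by
      rw [hE2]
      exact pr_congr fun ω => and_congr_right fun _ => hiffiC ω
    have goal2 : pr p (fun ω => θ ω = t ∧ coalitionData D C ω = u) = E1 := by
      rw [hE1]
      exact pr_congr fun ω => and_congr_right fun _ => hiffC ω
    have goal3 : pr p (fun ω => θ ω = t ∧ D i ω = w) = Pi := by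
      rw [hPi, hfi]
    rw [goal1, goal2, goal3]
    by_cases hA : Apr = 0
    · have hE2z : E2 = 0 := le_antisymm
        (hA ▸ pr_mono hp fun ω h => h.1) (pr_nonneg hp _)
      have hE1z : E1 = 0 := le_antisymm
        (hA ▸ pr_mono hp fun ω h => h.1) (pr_nonneg hp _)
      rw [hA, hE1z, mul_zero, zero_mul]
    · have hpow : Apr ^ C.card ≠ 0 := pow_ne_zero _ hA
      apply mul_right_cancel₀ hpow
      calc E2 * Apr * Apr ^ C.card = E2 * Apr ^ (C.card + 1) := by ring
        _ = Apr * (Pi * PC) := h2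
        _ = Pi * (Apr * PC) := by ring
        _ = Pi * (E1 * Apr ^ C.card) := by rw [← h1]
        _ = E1 * Pi * Apr ^ C.card := by ring
  · push_neg at hatt
    rw [pr_eq_zero_of_forall_not
        (E := fun ω => θ ω = t ∧ coalitionData D C ω = u ∧ D i ω = w)
        (fun ω h => hatt ω h.2.1),
      pr_eq_zero_of_forall_not
        (E := fun ω => θ ω = t ∧ coalitionData D C ω = u)
        (fun ω h => hatt ω h.2), zero_mul, zero_mul]

/-- Entropy recoding: `(θ, D_{C ∪ {i}})` versus `(θ, D_C, D_i)`. -/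
lemma recode_theta_insert (v0 : V) {i : Fin n} {C : Finset (Fin n)} (hiC : i ∉ C) :
    entropy p (fun ω => (θ ω, coalitionData D (insert i C) ω)) =
      entropy p (fun ω => (θ ω, coalitionData D C ω, D i ω)) := by
  apply entropy_congr (p := p) _ _
    (fun x => (x.1, fun j => if j ∈ C then x.2 j else none, (x.2 i).getD v0))
    (fun x => (x.1, fun j => if j = i then some x.2.2 else x.2.1 j))
  · intro ω
    refine Prod.ext rfl (Prod.ext ?_ ?_)
    · funext j
      simp only [coalitionData]
      by_cases hj : j ∈ C
      · rw [if_pos hj, if_pos (Finset.mem_insert_of_mem hj), if_pos hj]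
      · simp [hj]
    · simp [coalitionData]
  · intro ω
    refine Prod.ext rfl ?_
    funext j
    simp only [coalitionData]
    by_cases hj : j = i
    · subst hj
      rw [if_pos rfl, if_pos (Finset.mem_insert_self j C)]
    · rw [if_neg hj]
      by_cases hjC : j ∈ C
      · rw [if_pos hjC, if_pos (Finset.mem_insert_of_mem hjC)]
      · rw [if_neg hjC, if_neg (by simp [hj, hjC])]

/-- Entropy recoding: `D_{C ∪ {i}}` versus `(D_i, D_C)`. -/
lemma recode_insert (v0 : V) {i : Fin n} {C : Finset (Fin n)} (hiC : i ∉ C) :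
    entropy p (fun ω => (D i ω, coalitionData D C ω)) =
      entropy p (coalitionData D (insert i C)) := by
  apply entropy_congr (p := p) _ _
    (fun x => fun j => if j = i then some x.1 else x.2 j)
    (fun u => ((u i).getD v0, fun j => if j ∈ C then u j else none))
  · intro ω
    funext j
    simp only [coalitionData]
    by_cases hj : j = i
    · subst hj
      rw [if_pos rfl, if_pos (Finset.mem_insert_self j C)]
    · rw [if_neg hj]
      by_cases hjC : j ∈ C
      · rw [if_pos hjC, if_pos (Finset.mem_insert_of_mem hjC)]
      · rw [if_neg hjC, if_neg (by simp [hj, hjC])]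
  · intro ω
    refine Prod.ext ?_ ?_
    · simp [coalitionData]
    · funext j
      simp only [coalitionData]
      by_cases hj : j ∈ C
      · rw [if_pos hj, if_pos (Finset.mem_insert_of_mem hj), if_pos hj]
      · simp [hj]

/-- Entropy recoding: `(D_i, D_C, D_{C'∖C})` versus `D_{C' ∪ {i}}`. -/
lemma recode_triple (v0 : V) {i : Fin n} {C C' : Finset (Fin n)} (hCC' : C ⊆ C')
    (hiC' : i ∉ C') :
    entropy p (fun ω => (D i ω, coalitionData D C ω, coalitionData D (C' \ C) ω)) =
      entropy p (coalitionData D (insert i C')) := by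
  apply entropy_congr (p := p) _ _
    (fun x => fun j => if j = i then some x.1 else if j ∈ C then x.2.1 j else x.2.2 j)
    (fun u => ((u i).getD v0, (fun j => if j ∈ C then u j else none),
      (fun j => if j ∈ C' \ C then u j else none)))
  · intro ω
    funext j
    simp only [coalitionData]
    by_cases hj : j = i
    · subst hj
      rw [if_pos rfl, if_pos (Finset.mem_insert_self j C')]
    · rw [if_neg hj]
      by_cases hjC : j ∈ C
      · rw [if_pos hjC, if_pos hjC, if_pos (Finset.mem_insert_of_mem (hCC' hjC))]
      · rw [if_neg hjC]
        by_cases hjC' : j ∈ C'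
        · rw [if_pos (Finset.mem_sdiff.mpr ⟨hjC', hjC⟩),
            if_pos (Finset.mem_insert_of_mem hjC')]
        · rw [if_neg (fun hmem => hjC' (Finset.mem_sdiff.mp hmem).1),
            if_neg (by simp [hj, hjC'])]
  · intro ω
    refine Prod.ext ?_ (Prod.ext ?_ ?_)
    · simp [coalitionData]
    · funext j
      simp only [coalitionData]
      by_cases hj : j ∈ C
      · rw [if_pos hj, if_pos (Finset.mem_insert_of_mem (hCC' hj)), if_pos hj]
      · simp [hj]
    · funext j
      simp only [coalitionData]
      by_cases hj : j ∈ C' \ C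
      · rw [if_pos hj, if_pos (Finset.mem_insert_of_mem (Finset.mem_sdiff.mp hj).1),
          if_pos hj]
      · simp [hj]

/-- Entropy recoding: `(D_C, D_{C'∖C})` versus `D_{C'}`. -/
lemma recode_union {C C' : Finset (Fin n)} (hCC' : C ⊆ C') :
    entropy p (fun ω => (coalitionData D C ω, coalitionData D (C' \ C) ω)) =
      entropy p (coalitionData D C') := by
  apply entropy_congr (p := p) _ _
    (fun x => fun j => if j ∈ C then x.1 j else x.2 j)
    (fun u => ((fun j => if j ∈ C then u j else none),
      (fun j => if j ∈ C' \ C then u j else none)))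
  · intro ω
    funext j
    simp only [coalitionData]
    by_cases hj : j ∈ C
    · rw [if_pos hj, if_pos hj, if_pos (hCC' hj)]
    · rw [if_neg hj]
      by_cases hjC' : j ∈ C'
      · rw [if_pos (Finset.mem_sdiff.mpr ⟨hjC', hj⟩), if_pos hjC']
      · rw [if_neg (fun hmem => hjC' (Finset.mem_sdiff.mp hmem).1), if_neg hjC']
  · intro ω
    refine Prod.ext ?_ ?_
    · funext j
      simp only [coalitionData]
      by_cases hj : j ∈ C
      · rw [if_pos hj, if_pos (hCC' hj), if_pos hj]
      · simp [hj]
    · funext j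
      simp only [coalitionData]
      by_cases hj : j ∈ C' \ C
      · rw [if_pos hj, if_pos (Finset.mem_sdiff.mp hj).1, if_pos hj]
      · simp [hj]

end coalition

/-- If the coalition value is the information gain `v C = H(θ) - H(θ | D_C)` and the
datasets `D i` are (mutually) conditionally independent given `θ`, then `v` is
submodular: for all `i` and `C ⊆ C' ⊆ N \ {i}`,
`v (C' ∪ {i}) - v C' ≤ v (C ∪ {i}) - v C`. -/
theorem igValue_submodular {n : ℕ} (p : Ω → ℝ) (θ : Ω → Θ) (D : Fin n → Ω → V)
    (hp : ∀ ω, 0 ≤ p ω) (hp1 : ∑ ω, p ω = 1)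
    (hCondIndep : ∀ (C : Finset (Fin n)) (t : Θ) (f : Fin n → V),
      pr p (fun ω => θ ω = t ∧ ∀ i ∈ C, D i ω = f i) *
          (pr p (fun ω => θ ω = t)) ^ (C.card) =
        pr p (fun ω => θ ω = t) *
          ∏ i ∈ C, pr p (fun ω => θ ω = t ∧ D i ω = f i)) :
    ∀ (i : Fin n) (C C' : Finset (Fin n)), C ⊆ C' → i ∉ C' →
      igValue p θ D (insert i C') - igValue p θ D C' ≤
        igValue p θ D (insert i C) - igValue p θ D C := by
  intro i C C' hCC' hiC'
  have hiC : i ∉ C := fun h => hiC' (hCC' h)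
  rcases isEmpty_or_nonempty Ω with hΩ | hΩ
  · simp [igValue, condEntropy, entropy_of_isEmpty]
  · obtain ⟨ω₀⟩ := hΩ
    have v0 : V := D i ω₀
    have claim1 : ∀ (B : Finset (Fin n)), i ∉ B →
        entropy p (fun ω => (θ ω, coalitionData D (insert i B) ω)) =
          entropy p (fun ω => (θ ω, coalitionData D B ω)) +
            entropy p (fun ω => (θ ω, D i ω)) - entropy p θ := by
      intro B hiB
      rw [recode_theta_insert v0 hiB]
      exact entropy_condIndep hp θ (coalitionData D B) (D i)
        (fun t u w => coalition_fac hp hCondIndep hiB t u w)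
    have star := entropy_SSA hp (D i) (coalitionData D C) (coalitionData D (C' \ C))
    rw [recode_triple v0 hCC' hiC', recode_insert v0 hiC, recode_union hCC'] at star
    have h1 := claim1 C hiC
    have h2 := claim1 C' hiC'
    simp only [igValue, condEntropy]
    linarith [star, h1, h2]

end IGSubmodular
end

section
/- The Shapley value satisfies strict desirability: if parties i ≠ j satisfy v(C ∪ {i}) ≥ v(C ∪ {j}) for all coalitions C ⊆ N \ {i,j}, with strict inequality for at least one such coalition B, then φ_i > φ_j. -/
def preceding {n : ℕ} (σ : Equiv.Perm (Fin n)) (i : Fin n) : Finset (Fin n) :=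
  Finset.univ.filter (fun j => σ j < σ i)

/-- The Shapley value of party `i`: the average over all permutations of the
marginal contribution of `i` to the coalition of parties preceding it. -/
noncomputable def shapley {n : ℕ} (v : Finset (Fin n) → ℝ) (i : Fin n) : ℝ :=
  (∑ σ : Equiv.Perm (Fin n), (v (insert i (preceding σ i)) - v (preceding σ i))) /
    (Nat.factorial n)

/-!
Composing a permutation with the transposition `(i j)` turns the coalition preceding `i` into
the one preceding `j` with `i` and `j` exchanged. Pairing the two orders in this way, the
marginal contributions of `i` and `j` differ by `v (C ∪ {i}) - v (C ∪ {j})`, where `C` is the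
coalition preceding `i` with `j` removed. These differences are all nonnegative, and the one
for an order in which exactly `B` precedes `i` is positive.
-/

open Equiv Finset

theorem List.idxOf_lt_idxOf_append_cons_iff {α : Type*} [BEq α] [LawfulBEq α]
    {l₁ l₂ : List α} {a b : α} (ha : a ∉ l₁) :
    (l₁ ++ a :: l₂).idxOf b < (l₁ ++ a :: l₂).idxOf a ↔ b ∈ l₁ := by
  rw [List.idxOf_append_of_notMem ha, List.idxOf_cons_self]
  by_cases hb : b ∈ l₁
  · simpa [hb, List.idxOf_append_of_mem hb] using List.idxOf_lt_length_iff.2 hb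
  · simp [hb, List.idxOf_append_of_notMem hb]

theorem Finset.map_swap_eq_self {α : Type*} [DecidableEq α] {s : Finset α} {a b : α}
    (ha : a ∉ s) (hb : b ∉ s) : s.map (swap a b).toEmbedding = s := by
  ext k
  rw [mem_map_equiv, symm_swap]
  by_cases hk : k ∈ s
  · rw [swap_apply_of_ne_of_ne (ne_of_mem_of_not_mem hk ha) (ne_of_mem_of_not_mem hk hb)]
  · grind

section Permutations

variable {n : ℕ}

theorem exists_perm_val_eq_idxOf {l : List (Fin n)} (hl : l.Nodup) (hmem : ∀ k, k ∈ l) :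
    ∃ σ : Perm (Fin n), ∀ k, (σ k : ℕ) = l.idxOf k := by
  let e := hl.getEquivOfForallMemList l hmem
  have hlen : l.length = n := by simpa using Fintype.card_congr e
  exact ⟨e.symm.trans (finCongr hlen), fun _ => rfl⟩

theorem mem_preceding {σ : Perm (Fin n)} {i k : Fin n} : k ∈ preceding σ i ↔ σ k < σ i := by
  simp [preceding]

theorem self_notMem_preceding (σ : Perm (Fin n)) (i : Fin n) : i ∉ preceding σ i := by
  simp [mem_preceding]

theorem self_notMem_preceding_erase (σ : Perm (Fin n)) (i j : Fin n) :
    i ∉ (preceding σ i).erase j :=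
  notMem_mono (erase_subset j _) (self_notMem_preceding σ i)

theorem exists_preceding_eq {i : Fin n} {s : Finset (Fin n)} (hi : i ∉ s) :
    ∃ σ : Perm (Fin n), preceding σ i = s := by
  let l := s.sort (· ≤ ·) ++ i :: (insert i s)ᶜ.sort (· ≤ ·)
  have hl : l.Nodup := by
    simp only [l, List.nodup_append, List.nodup_cons, sort_nodup, List.mem_cons, mem_sort,
      mem_compl, mem_insert]
    grind
  have hmem : ∀ k, k ∈ l := by
    intro k
    by_cases k ∈ s <;> by_cases k = i <;> simp_all [l]
  obtain ⟨σ, hσ⟩ := exists_perm_val_eq_idxOf hl hmem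
  refine ⟨σ, ext fun k => ?_⟩
  rw [mem_preceding, Fin.lt_def, hσ, hσ, List.idxOf_lt_idxOf_append_cons_iff (by simpa using hi),
    mem_sort]

theorem preceding_mul (σ τ : Perm (Fin n)) (k : Fin n) :
    preceding (σ * τ) k = (preceding σ (τ k)).map τ.symm.toEmbedding := by
  ext k'
  simp [mem_preceding, mem_map_equiv]

theorem preceding_mul_swap (σ : Perm (Fin n)) (i j : Fin n) :
    preceding (σ * swap i j) j = (preceding σ i).map (swap i j).toEmbedding := by
  rw [preceding_mul, swap_apply_right, symm_swap]

end Permutations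

section Shapley

variable {n : ℕ} (v : Finset (Fin n) → ℝ)

def marginalContribution (s : Finset (Fin n)) (i : Fin n) : ℝ :=
  v (insert i s) - v s

theorem shapley_eq_sum_marginalContribution (i : Fin n) :
    shapley v i =
      (∑ σ : Perm (Fin n), marginalContribution v (preceding σ i) i) / n.factorial :=
  rfl

theorem marginalContribution_sub_marginalContribution_mul_swap (σ : Perm (Fin n)) (i j : Fin n) :
    marginalContribution v (preceding σ i) i -
        marginalContribution v (preceding (σ * swap i j) j) j =
      v (insert i ((preceding σ i).erase j)) - v (insert j ((preceding σ i).erase j)) := by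
  set C := (preceding σ i).erase j
  have hiC : i ∉ C := self_notMem_preceding_erase σ i j
  have hjC : j ∉ C := notMem_erase j _
  rw [preceding_mul_swap, marginalContribution, marginalContribution]
  by_cases hj : j ∈ preceding σ i
  · have hS : preceding σ i = insert j C := (insert_erase hj).symm
    clear_value C
    rw [hS, map_insert, coe_toEmbedding, swap_apply_right, map_swap_eq_self hiC hjC, insert_comm]
    ring
  · have hS : preceding σ i = C := (erase_eq_of_notMem hj).symm
    clear_value C
    rw [hS, map_swap_eq_self hiC hjC]
    ring

theorem shapley_sub_shapley (i j : Fin n) :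
    shapley v i - shapley v j =
      (∑ σ : Perm (Fin n), (v (insert i ((preceding σ i).erase j)) -
        v (insert j ((preceding σ i).erase j)))) / n.factorial := by
  have hj : ∑ σ : Perm (Fin n), marginalContribution v (preceding σ j) j =
      ∑ σ : Perm (Fin n), marginalContribution v (preceding (σ * swap i j) j) j :=
    (Fintype.sum_equiv (Equiv.mulRight (swap i j)) _ _ fun _ => rfl).symm
  rw [shapley_eq_sum_marginalContribution, shapley_eq_sum_marginalContribution, hj, ← sub_div,
    ← sum_sub_distrib]
  simp_rw [marginalContribution_sub_marginalContribution_mul_swap v _ i j]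

end Shapley

theorem shapley_strict_desirability_general {n : ℕ} (v : Finset (Fin n) → ℝ) (i j : Fin n)
    (hge : ∀ C : Finset (Fin n), i ∉ C → j ∉ C → v (insert j C) ≤ v (insert i C))
    (hstrict : ∃ B : Finset (Fin n), i ∉ B ∧ j ∉ B ∧ v (insert j B) < v (insert i B)) :
    shapley v j < shapley v i := by
  obtain ⟨B, hiB, hjB, hB⟩ := hstrict
  obtain ⟨σ₀, hσ₀⟩ := exists_preceding_eq hiB
  rw [← sub_pos, shapley_sub_shapley v i j]
  have hle (σ : Perm (Fin n)) :=
    hge _ (self_notMem_preceding_erase σ i j) (notMem_erase j (preceding σ i))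
  refine div_pos (sum_pos' (fun σ _ => sub_nonneg.2 (hle σ)) ⟨σ₀, mem_univ _, ?_⟩)
    (by positivity)
  rw [hσ₀, erase_eq_of_notMem hjB]
  exact sub_pos.2 hB

theorem shapley_strict_desirability {n : ℕ} (v : Finset (Fin n) → ℝ) (i j : Fin n)
    (hij : i ≠ j)
    (hge : ∀ C : Finset (Fin n), i ∉ C → j ∉ C → v (insert j C) ≤ v (insert i C))
    (hstrict : ∃ B : Finset (Fin n), i ∉ B ∧ j ∉ B ∧ v (insert j B) < v (insert i B)) :
    shapley v j < shapley v i :=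
  shapley_strict_desirability_general v i j hge hstrict
end

section
/- Let φ_i > 0 for all i ∈ N, φ* = max_j φ_j, v(N) > 0, v_i > 0 with v_i ≤ v(N) for each i. Define ρ_r = min_{j∈N} log(v_j/v(N)) / log(φ_j/φ*) (interpreting terms with φ_j = φ* appropriately, i.e., taking the min over j with φ_j < φ*). If 0 < ρ ≤ ρ_r, then the rewards r_i = (φ_i/φ*)^ρ · v(N) satisfy individual rationality: r_i ≥ v_i for all i ∈ N. -/
/-- Individual rationality of the ρ-Shapley reward scheme when
`ρ ≤ ρ_r = min_{j : φ j < φ*} log(v j / vN) / log(φ j / φ*)`. -/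
theorem rewards_individually_rational {ι : Type*} [Fintype ι] [Nonempty ι]
    (φ v : ι → ℝ) (φstar vN ρ : ℝ)
    (hφ : ∀ i, 0 < φ i)
    (hub : ∀ i, φ i ≤ φstar) (hmem : ∃ i, φ i = φstar)
    (hvN : 0 < vN) (hv : ∀ i, 0 < v i) (hvle : ∀ i, v i ≤ vN)
    (hρpos : 0 < ρ)
    (hρ : ∀ j, φ j < φstar → ρ ≤ Real.log (v j / vN) / Real.log (φ j / φstar)) :
    ∀ i, v i ≤ (φ i / φstar) ^ ρ * vN := by
  intro i
  have hφstar : 0 < φstar := lt_of_lt_of_le (hφ i) (hub i)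
  rcases eq_or_lt_of_le (hub i) with heq | hlt
  · rw [heq, div_self hφstar.ne', Real.one_rpow, one_mul]
    exact hvle i
  · have hx : (0:ℝ) < φ i / φstar := div_pos (hφ i) hφstar
    have hx1 : φ i / φstar < 1 := (div_lt_one hφstar).mpr hlt
    have hL : Real.log (φ i / φstar) < 0 := Real.log_neg hx hx1
    have h := hρ i hlt
    have hmul : Real.log (v i / vN) ≤ Real.log (φ i / φstar) * ρ := by
      rw [le_div_iff_of_neg hL, mul_comm] at h
      exact h
    have : v i / vN ≤ (φ i / φstar) ^ ρ := by
      have := Real.exp_le_exp.mpr hmul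
      rwa [Real.exp_log (div_pos (hv i) hvN), ← Real.rpow_def_of_pos hx] at this
    calc v i = v i / vN * vN := by field_simp
      _ ≤ (φ i / φstar) ^ ρ * vN := by
          exact mul_le_mul_of_nonneg_right this hvN.le
end

section
/- Let φ_i > 0 for all i ∈ N, φ* = max_j φ_j, v(N) > 0. For each party i, let C_i = {j ∈ N : φ_j ≤ φ_i} and suppose 0 < v(C_i) ≤ v(N). Define ρ_s = min over j with φ_j < φ* of log(v(C_j)/v(N)) / log(φ_j/φ*). If 0 < ρ ≤ ρ_s, then the rewards r_i = (φ_i/φ*)^ρ · v(N) satisfy r_i ≥ v(C_i) for all i ∈ N. -/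
/-- Stability-type bound of the ρ-Shapley reward scheme: each party's reward is at
least the value of the coalition `C_i` of parties with Shapley value at most `φ i`,
provided `ρ ≤ ρ_s = min_{j : φ j < φ*} log(v (C_j) / v N) / log(φ j / φ*)`. -/
theorem rewards_stability {ι : Type*} [Fintype ι] [Nonempty ι] [DecidableEq ι]
    (φ : ι → ℝ) (v : Finset ι → ℝ) (φstar ρ : ℝ)
    (C : ι → Finset ι)
    (hC : ∀ i, C i = Finset.univ.filter (fun j => φ j ≤ φ i))
    (hφ : ∀ i, 0 < φ i)
    (hub : ∀ i, φ i ≤ φstar) (hmem : ∃ i, φ i = φstar)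
    (hvN : 0 < v Finset.univ)
    (hvC : ∀ i, 0 < v (C i)) (hvCle : ∀ i, v (C i) ≤ v Finset.univ)
    (hρpos : 0 < ρ)
    (hρ : ∀ j, φ j < φstar →
      ρ ≤ Real.log (v (C j) / v Finset.univ) / Real.log (φ j / φstar)) :
    ∀ i, v (C i) ≤ (φ i / φstar) ^ ρ * v Finset.univ := by
  intro i
  have hφstar : 0 < φstar := lt_of_lt_of_le (hφ i) (hub i)
  rcases eq_or_lt_of_le (hub i) with heq | hlt
  · rw [heq, div_self (ne_of_gt hφstar), Real.one_rpow, one_mul]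
    exact hvCle i
  · have hx : 0 < φ i / φstar := div_pos (hφ i) hφstar
    have hx1 : φ i / φstar < 1 := (div_lt_one hφstar).mpr hlt
    have hlogneg : Real.log (φ i / φstar) < 0 := Real.log_neg hx hx1
    have h := hρ i hlt
    have hmul : ρ * Real.log (φ i / φstar) ≥ Real.log (v (C i) / v Finset.univ) := by
      have := mul_le_mul_of_nonpos_right h (le_of_lt hlogneg)
      rwa [div_mul_cancel₀ _ (ne_of_lt hlogneg)] at this
    have hratio : v (C i) / v Finset.univ ≤ (φ i / φstar) ^ ρ := by
      rw [Real.rpow_def_of_pos hx]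
      calc v (C i) / v Finset.univ
          = Real.exp (Real.log (v (C i) / v Finset.univ)) := by
            rw [Real.exp_log (div_pos (hvC i) hvN)]
        _ ≤ Real.exp (ρ * Real.log (φ i / φstar)) := Real.exp_le_exp.mpr hmul
        _ = Real.exp (Real.log (φ i / φstar) * ρ) := by ring_nf
    calc v (C i) = (v (C i) / v Finset.univ) * v Finset.univ := by
          field_simp
      _ ≤ (φ i / φstar) ^ ρ * v Finset.univ := by
          exact mul_le_mul_of_nonneg_right hratio (le_of_lt hvN)
end
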